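/- arXiv:1203.0632 — 3 statements merged into one kernel-verified Lean document; each statement's English description precedes it below -/
import Mathlib

section
/- Let V and W₁, …, W_J be finite-dimensional real inner product spaces. Let A and S be self-adjoint positive-definite linear operators on V, let A_j be a self-adjoint positive-definite linear operator on W_j for each j = 1, …, J, and let Π_j : W_j → V be linear maps with adjoints Π_j* : V → W_j. Define the preconditioner B := S⁻¹ + Σ_{j=1}^J Π_j ∘ A_j⁻¹ ∘ Π_j*. Assume: (1) there are constants c_j > 0 such that ⟨A Π_j w_j, Π_j w_j⟩ ≤ c_j² ⟨A_j w_j, w_j⟩ for all w_j ∈ W_j; (2) there is a constant c_s > 0 such that ⟨A v, v⟩ ≤ c_s² ⟨S v, v⟩ for all v ∈ V; (3) there is a constant c₀ > 0 such that every v ∈ V admits a decomposition v = v₀ + Σ_{j=1}^J Π_j w_j with v₀ ∈ V, w_j ∈ W_j, and ⟨S v₀, v₀⟩ + Σ_{j=1}^J ⟨A_j w_j, w_j⟩ ≤ c₀² ⟨A v, v⟩. Then for every v ∈ V, c₀⁻² ⟨A v, v⟩ ≤ ⟨A B A v, v⟩ ≤ (c_s² + c_1² + ⋯ + c_J²) ⟨A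 v, v⟩; in particular, the condition number of B∘A (the ratio of the supremum to the infimum over v ≠ 0 of the Rayleigh quotients ⟨A B A v, v⟩ / ⟨A v, v⟩) is at most c₀² (c_s² + c_1² + ⋯ + c_J²). -/
open RealInnerProductSpace

/-!
With `u = A v`, the quantity `⟪A B A v, v⟫ = ⟪B u, u⟫` is a sum of terms
`⟪Π A_j⁻¹ Π* u, u⟫ = ⟪A_j z, z⟫` with `z = A_j⁻¹ Π* u`; the smoother is the term with `Π = id`
and `A_j = S`. Cauchy–Schwarz for `⟪A ·, ·⟫`, combined with the bound on `Π`, gives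
`⟪Π z, A v⟫² ≤ c² ⟪Π z, A v⟫ ⟪A v, v⟫` for each term, hence the upper bound. For the lower
bound, pairing `u` with a stable decomposition `v = v₀ + Σ Π_j w_j` gives
`⟪A v, v⟫ = ⟪S z₀, v₀⟫ + Σ ⟪A_j z_j, w_j⟫`, and Cauchy–Schwarz termwise and then over the sum
yields `⟪A v, v⟫² ≤ ⟪B u, u⟫ · c₀² ⟪A v, v⟫`.
-/

theorem LinearMap.IsPositive.inner_sq_le {E : Type*} [NormedAddCommGroup E]
    [InnerProductSpace ℝ E] {T : E →ₗ[ℝ] E} (hT : T.IsPositive) (x y : E) :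
    ⟪T x, y⟫ ^ 2 ≤ ⟪T x, x⟫ * ⟪T y, y⟫ := by
  have := LinearMap.BilinForm.apply_mul_apply_le_of_forall_zero_le (innerₗ E ∘ₗ T)
    hT.inner_nonneg_left x y
  simp only [LinearMap.comp_apply, innerₗ_apply_apply] at this
  rwa [hT.isSymmetric y x, real_inner_comm (T x) y, ← sq] at this

theorem LinearMap.IsSymmetric.isPositive_of_inner_pos {E : Type*} [NormedAddCommGroup E]
    [InnerProductSpace ℝ E] {T : E →ₗ[ℝ] E} (hT : T.IsSymmetric)
    (hpos : ∀ x, x ≠ 0 → 0 < ⟪T x, x⟫) : T.IsPositive := by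
  refine T.isPositive_iff.mpr ⟨hT, fun x => ?_⟩
  rcases eq_or_ne x 0 with rfl | hx
  · simp
  · exact (hpos x hx).le

theorem add_sq_le_add_mul_add {a b f g h k : ℝ} (hf : 0 ≤ f) (hg : 0 ≤ g) (hh : 0 ≤ h)
    (hk : 0 ≤ k) (hab : a ^ 2 ≤ f * g) (hbh : b ^ 2 ≤ h * k) :
    (a + b) ^ 2 ≤ (f + h) * (g + k) := by
  simpa using Finset.sum_sq_le_sum_mul_sum_of_sq_le_mul Finset.univ
    (r := ![a, b]) (f := ![f, h]) (g := ![g, k])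
    (by simp [Fin.forall_fin_two, hf, hh]) (by simp [Fin.forall_fin_two, hg, hk])
    (by simp [Fin.forall_fin_two, hab, hbh])

theorem le_mul_of_sq_le_mul_of_le_mul {p t d K : ℝ} (hp : 0 ≤ p) (ht : 0 ≤ t) (hK : 0 ≤ K)
    (hsq : p ^ 2 ≤ t * d) (hd : d ≤ K * p) : p ≤ K * t := by
  rcases hp.eq_or_lt with rfl | hp
  · positivity
  · nlinarith

theorem sSup_div_sInf_le {s : Set ℝ} {m M : ℝ} (hm : 0 < m) (hM : 0 ≤ M)
    (hs : s ⊆ Set.Icc m M) : sSup s / sInf s ≤ M / m := by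
  rcases s.eq_empty_or_nonempty with rfl | hne
  · simp only [Real.sSup_empty, Real.sInf_empty, zero_div]
    positivity
  · exact div_le_div₀ hM (csSup_le hne fun q hq => (hs hq).2) hm
      (le_csInf hne fun q hq => (hs hq).1)

section Transfer

variable {V W : Type*} [NormedAddCommGroup V] [InnerProductSpace ℝ V]
  [NormedAddCommGroup W] [InnerProductSpace ℝ W]
  {C Cinv : W →ₗ[ℝ] W} {P : W →ₗ[ℝ] V} {Pstar : V →ₗ[ℝ] W}

theorem inner_transfer_apply_self (hCinv : C ∘ₗ Cinv = LinearMap.id)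
    (hP : ∀ w v, ⟪P w, v⟫ = ⟪w, Pstar v⟫) (u : V) :
    ⟪(P ∘ₗ Cinv ∘ₗ Pstar) u, u⟫ = ⟪C (Cinv (Pstar u)), Cinv (Pstar u)⟫ := by
  rw [LinearMap.comp_apply, LinearMap.comp_apply, hP, real_inner_comm,
    ← LinearMap.comp_apply C Cinv, hCinv, LinearMap.id_apply]

theorem inner_apply_transfer (hCinv : C ∘ₗ Cinv = LinearMap.id)
    (hP : ∀ w v, ⟪P w, v⟫ = ⟪w, Pstar v⟫) (u : V) (w : W) :
    ⟪u, P w⟫ = ⟪C (Cinv (Pstar u)), w⟫ := by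
  rw [real_inner_comm, hP, ← LinearMap.comp_apply C Cinv, hCinv, LinearMap.id_apply,
    real_inner_comm]

theorem inner_transfer_nonneg (hC : C.IsPositive) (hCinv : C ∘ₗ Cinv = LinearMap.id)
    (hP : ∀ w v, ⟪P w, v⟫ = ⟪w, Pstar v⟫) (u : V) :
    0 ≤ ⟪(P ∘ₗ Cinv ∘ₗ Pstar) u, u⟫ := by
  rw [inner_transfer_apply_self hCinv hP]
  exact hC.inner_nonneg_left _

theorem inner_sq_le_inner_transfer_mul (hC : C.IsPositive) (hCinv : C ∘ₗ Cinv = LinearMap.id)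
    (hP : ∀ w v, ⟪P w, v⟫ = ⟪w, Pstar v⟫) (u : V) (w : W) :
    ⟪u, P w⟫ ^ 2 ≤ ⟪(P ∘ₗ Cinv ∘ₗ Pstar) u, u⟫ * ⟪C w, w⟫ := by
  rw [inner_apply_transfer hCinv hP, inner_transfer_apply_self hCinv hP]
  exact hC.inner_sq_le _ _

theorem inner_transfer_le {A : V →ₗ[ℝ] V} (hA : A.IsPositive)
    (hCinv : C ∘ₗ Cinv = LinearMap.id) (hP : ∀ w v, ⟪P w, v⟫ = ⟪w, Pstar v⟫)
    {K : ℝ} (hK : 0 ≤ K) (hPC : ∀ w, ⟪A (P w), P w⟫ ≤ K * ⟪C w, w⟫) (v : V) :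
    ⟪(P ∘ₗ Cinv ∘ₗ Pstar) (A v), A v⟫ ≤ K * ⟪A v, v⟫ := by
  set x := (P ∘ₗ Cinv ∘ₗ Pstar) (A v)
  have hxx : ⟪A x, x⟫ ≤ K * ⟪x, A v⟫ := by
    rw [inner_transfer_apply_self hCinv hP]
    exact hPC _
  have hsq : ⟪x, A v⟫ ^ 2 ≤ ⟪A x, x⟫ * ⟪A v, v⟫ := by
    rw [← hA.isSymmetric]
    exact hA.inner_sq_le x v
  rcases le_or_gt ⟪x, A v⟫ 0 with hneg | hpos
  · exact hneg.trans (mul_nonneg hK (hA.inner_nonneg_left v))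
  · nlinarith [hA.inner_nonneg_left v]

end Transfer

theorem inner_sq_le_of_eq_add_sum {V : Type*} [NormedAddCommGroup V] [InnerProductSpace ℝ V]
    {ι : Type*} [Fintype ι] {W : ι → Type*} [∀ i, NormedAddCommGroup (W i)]
    [∀ i, InnerProductSpace ℝ (W i)] {S Sinv : V →ₗ[ℝ] V} (hS : S.IsPositive)
    (hSinv : S ∘ₗ Sinv = LinearMap.id) {C Cinv : ∀ i, W i →ₗ[ℝ] W i}
    (hC : ∀ i, (C i).IsPositive) (hCinv : ∀ i, C i ∘ₗ Cinv i = LinearMap.id)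
    {P : ∀ i, W i →ₗ[ℝ] V} {Pstar : ∀ i, V →ₗ[ℝ] W i}
    (hP : ∀ i w v, ⟪P i w, v⟫ = ⟪w, Pstar i v⟫) (u : V) {v v₀ : V} {w : ∀ i, W i}
    (hv : v = v₀ + ∑ i, P i (w i)) :
    ⟪u, v⟫ ^ 2 ≤ (⟪Sinv u, u⟫ + ∑ i, ⟪(P i ∘ₗ Cinv i ∘ₗ Pstar i) u, u⟫) *
      (⟪S v₀, v₀⟫ + ∑ i, ⟪C i (w i), w i⟫) := by
  have hid : ∀ x y : V, ⟪LinearMap.id (R := ℝ) x, y⟫ = ⟪x, LinearMap.id (R := ℝ) y⟫ :=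
    fun _ _ => rfl
  rw [hv, inner_add_right, inner_sum]
  refine add_sq_le_add_mul_add (inner_transfer_nonneg hS hSinv hid u)
    (hS.inner_nonneg_left v₀)
    (Finset.sum_nonneg fun i _ => inner_transfer_nonneg (hC i) (hCinv i) (hP i) u)
    (Finset.sum_nonneg fun i _ => (hC i).inner_nonneg_left (w i))
    (inner_sq_le_inner_transfer_mul hS hSinv hid u v₀) ?_
  exact Finset.sum_sq_le_sum_mul_sum_of_sq_le_mul _
    (fun i _ => inner_transfer_nonneg (hC i) (hCinv i) (hP i) u)
    (fun i _ => (hC i).inner_nonneg_left (w i))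
    (fun i _ => inner_sq_le_inner_transfer_mul (hC i) (hCinv i) (hP i) u (w i))

theorem fasp_condition_number_general
    {V : Type*} [NormedAddCommGroup V] [InnerProductSpace ℝ V]
    (J : ℕ) (W : Fin J → Type*)
    [∀ j, NormedAddCommGroup (W j)] [∀ j, InnerProductSpace ℝ (W j)]
    (A S Sinv : V →ₗ[ℝ] V)
    (hA_sa : ∀ u v : V, ⟪A u, v⟫ = ⟪u, A v⟫)
    (hA_pd : ∀ v : V, v ≠ 0 → 0 < ⟪A v, v⟫)
    (hS_sa : ∀ u v : V, ⟪S u, v⟫ = ⟪u, S v⟫)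
    (hS_pd : ∀ v : V, v ≠ 0 → 0 < ⟪S v, v⟫)
    (hSinv₁ : S ∘ₗ Sinv = LinearMap.id)
    (Aop : ∀ j, W j →ₗ[ℝ] W j) (Aopinv : ∀ j, W j →ₗ[ℝ] W j)
    (hAop_sa : ∀ j, ∀ u v : W j, ⟪Aop j u, v⟫ = ⟪u, Aop j v⟫)
    (hAop_pd : ∀ j, ∀ w : W j, w ≠ 0 → 0 < ⟪Aop j w, w⟫)
    (hAopinv₁ : ∀ j, Aop j ∘ₗ Aopinv j = LinearMap.id)
    (Pi : ∀ j, W j →ₗ[ℝ] V) (PiStar : ∀ j, V →ₗ[ℝ] W j)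
    (hadj : ∀ j, ∀ (w : W j) (v : V), ⟪Pi j w, v⟫ = ⟪w, PiStar j v⟫)
    (c : Fin J → ℝ)
    (h1 : ∀ j, ∀ w : W j, ⟪A (Pi j w), Pi j w⟫ ≤ (c j) ^ 2 * ⟪Aop j w, w⟫)
    (cs : ℝ)
    (h2 : ∀ v : V, ⟪A v, v⟫ ≤ cs ^ 2 * ⟪S v, v⟫)
    (c0 : ℝ) (hc0 : 0 < c0)
    (h3 : ∀ v : V, ∃ (v0 : V) (w : ∀ j, W j),
        v = v0 + ∑ j, Pi j (w j) ∧
        ⟪S v0, v0⟫ + ∑ j, ⟪Aop j (w j), w j⟫ ≤ c0 ^ 2 * ⟪A v, v⟫) :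
    let B : V →ₗ[ℝ] V := Sinv + ∑ j, (Pi j) ∘ₗ (Aopinv j) ∘ₗ (PiStar j)
    (∀ v : V,
        (c0 ^ 2)⁻¹ * ⟪A v, v⟫ ≤ ⟪A (B (A v)), v⟫ ∧
        ⟪A (B (A v)), v⟫ ≤ (cs ^ 2 + ∑ j, (c j) ^ 2) * ⟪A v, v⟫) ∧
    sSup {r : ℝ | ∃ v : V, v ≠ 0 ∧ r = ⟪A (B (A v)), v⟫ / ⟪A v, v⟫} /
      sInf {r : ℝ | ∃ v : V, v ≠ 0 ∧ r = ⟪A (B (A v)), v⟫ / ⟪A v, v⟫}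
      ≤ c0 ^ 2 * (cs ^ 2 + ∑ j, (c j) ^ 2) := by
  intro B
  have hA := LinearMap.IsSymmetric.isPositive_of_inner_pos hA_sa hA_pd
  have hS := LinearMap.IsSymmetric.isPositive_of_inner_pos hS_sa hS_pd
  have hAop j := LinearMap.IsSymmetric.isPositive_of_inner_pos (hAop_sa j) (hAop_pd j)
  have hid : ∀ x y : V, ⟪LinearMap.id (R := ℝ) x, y⟫ = ⟪x, LinearMap.id (R := ℝ) y⟫ :=
    fun _ _ => rfl
  have hB v : ⟪A (B (A v)), v⟫ =
      ⟪Sinv (A v), A v⟫ + ∑ j, ⟪(Pi j ∘ₗ Aopinv j ∘ₗ PiStar j) (A v), A v⟫ := by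
    rw [hA_sa]
    simp only [B, LinearMap.add_apply, LinearMap.sum_apply, inner_add_left, sum_inner]
  have bounds v : (c0 ^ 2)⁻¹ * ⟪A v, v⟫ ≤ ⟪A (B (A v)), v⟫ ∧
      ⟪A (B (A v)), v⟫ ≤ (cs ^ 2 + ∑ j, (c j) ^ 2) * ⟪A v, v⟫ := by
    obtain ⟨v₀, w, hv, hstable⟩ := h3 v
    rw [hB, inv_mul_le_iff₀ (by positivity), add_mul, Finset.sum_mul]
    refine ⟨le_mul_of_sq_le_mul_of_le_mul (hA.inner_nonneg_left v) ?_ (by positivity)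
      (inner_sq_le_of_eq_add_sum hS hSinv₁ hAop hAopinv₁ hadj (A v) hv) hstable, ?_⟩
    · exact add_nonneg (inner_transfer_nonneg hS hSinv₁ hid (A v))
        (Finset.sum_nonneg fun j _ => inner_transfer_nonneg (hAop j) (hAopinv₁ j) (hadj j) _)
    · exact add_le_add
        (inner_transfer_le hA hSinv₁ hid (sq_nonneg cs) h2 v)
        (Finset.sum_le_sum fun j _ => inner_transfer_le hA (hAopinv₁ j) (hadj j)
          (sq_nonneg (c j)) (h1 j) v)
  refine ⟨bounds, ?_⟩
  rw [mul_comm, ← div_inv_eq_mul]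
  refine sSup_div_sInf_le (by positivity) (by positivity) ?_
  rintro _ ⟨v, hv, rfl⟩
  have hAv := hA_pd v hv
  exact ⟨(le_div_iff₀ hAv).mpr (bounds v).1, (div_le_iff₀ hAv).mpr (bounds v).2⟩

/-- The fast auxiliary space preconditioning (FASP) theorem.  Given self-adjoint
positive-definite operators `A`, `S` on `V` and `A_j` on auxiliary spaces `W_j`,
transfer maps `Π_j : W_j → V` with adjoints `Π_j*`, and the three FASP assumptions
(boundedness of the transfer maps, boundedness of the smoother, and existence of a
stable decomposition), the preconditioner `B = S⁻¹ + Σ_j Π_j ∘ A_j⁻¹ ∘ Π_j*`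
satisfies `c₀⁻² ⟨Av,v⟩ ≤ ⟨ABAv,v⟩ ≤ (c_s² + Σ_j c_j²) ⟨Av,v⟩` for all `v`; in
particular the condition number of `B∘A` (the ratio of the supremum to the infimum
of the Rayleigh quotients `⟨ABAv,v⟩/⟨Av,v⟩` over `v ≠ 0`) is at most
`c₀² (c_s² + Σ_j c_j²)`. -/
theorem fasp_condition_number
    {V : Type*} [NormedAddCommGroup V] [InnerProductSpace ℝ V] [FiniteDimensional ℝ V]
    (J : ℕ) (W : Fin J → Type*)
    [∀ j, NormedAddCommGroup (W j)] [∀ j, InnerProductSpace ℝ (W j)]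
    [∀ j, FiniteDimensional ℝ (W j)]
    (A S Sinv : V →ₗ[ℝ] V)
    (hA_sa : ∀ u v : V, ⟪A u, v⟫ = ⟪u, A v⟫)
    (hA_pd : ∀ v : V, v ≠ 0 → 0 < ⟪A v, v⟫)
    (hS_sa : ∀ u v : V, ⟪S u, v⟫ = ⟪u, S v⟫)
    (hS_pd : ∀ v : V, v ≠ 0 → 0 < ⟪S v, v⟫)
    (hSinv₁ : S ∘ₗ Sinv = LinearMap.id) (hSinv₂ : Sinv ∘ₗ S = LinearMap.id)
    (Aop : ∀ j, W j →ₗ[ℝ] W j) (Aopinv : ∀ j, W j →ₗ[ℝ] W j)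
    (hAop_sa : ∀ j, ∀ u v : W j, ⟪Aop j u, v⟫ = ⟪u, Aop j v⟫)
    (hAop_pd : ∀ j, ∀ w : W j, w ≠ 0 → 0 < ⟪Aop j w, w⟫)
    (hAopinv₁ : ∀ j, Aop j ∘ₗ Aopinv j = LinearMap.id)
    (hAopinv₂ : ∀ j, Aopinv j ∘ₗ Aop j = LinearMap.id)
    (Pi : ∀ j, W j →ₗ[ℝ] V) (PiStar : ∀ j, V →ₗ[ℝ] W j)
    (hadj : ∀ j, ∀ (w : W j) (v : V), ⟪Pi j w, v⟫ = ⟪w, PiStar j v⟫)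
    (c : Fin J → ℝ) (hc : ∀ j, 0 < c j)
    (h1 : ∀ j, ∀ w : W j, ⟪A (Pi j w), Pi j w⟫ ≤ (c j) ^ 2 * ⟪Aop j w, w⟫)
    (cs : ℝ) (hcs : 0 < cs)
    (h2 : ∀ v : V, ⟪A v, v⟫ ≤ cs ^ 2 * ⟪S v, v⟫)
    (c0 : ℝ) (hc0 : 0 < c0)
    (h3 : ∀ v : V, ∃ (v0 : V) (w : ∀ j, W j),
        v = v0 + ∑ j, Pi j (w j) ∧
        ⟪S v0, v0⟫ + ∑ j, ⟪Aop j (w j), w j⟫ ≤ c0 ^ 2 * ⟪A v, v⟫) :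
    let B : V →ₗ[ℝ] V := Sinv + ∑ j, (Pi j) ∘ₗ (Aopinv j) ∘ₗ (PiStar j)
    (∀ v : V,
        (c0 ^ 2)⁻¹ * ⟪A v, v⟫ ≤ ⟪A (B (A v)), v⟫ ∧
        ⟪A (B (A v)), v⟫ ≤ (cs ^ 2 + ∑ j, (c j) ^ 2) * ⟪A v, v⟫) ∧
    sSup {r : ℝ | ∃ v : V, v ≠ 0 ∧ r = ⟪A (B (A v)), v⟫ / ⟪A v, v⟫} /
      sInf {r : ℝ | ∃ v : V, v ≠ 0 ∧ r = ⟪A (B (A v)), v⟫ / ⟪A v, v⟫}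
      ≤ c0 ^ 2 * (cs ^ 2 + ∑ j, (c j) ^ 2) :=
  fasp_condition_number_general J W A S Sinv hA_sa hA_pd hS_sa hS_pd hSinv₁ Aop Aopinv hAop_sa
    hAop_pd hAopinv₁ Pi PiStar hadj c h1 cs h2 c0 hc0 h3
end

section
/- Let V be a finite-dimensional real inner product space and T : V → V a self-adjoint positive-definite linear operator. Suppose the set of eigenvalues of T is the union σ₀ ∪ σ₁, where σ₀ is a finite set with m elements and σ₁ is a nonempty set contained in the interval [a, b] with 0 < a ≤ b. Let u, u₀ ∈ V and let (u_k) be a sequence in V having the conjugate-gradient optimality property for target u and initial guess u₀ with respect to T. Then for every integer k ≥ m, ‖u − u_k‖_T ≤ 2 K ((√(b/a) − 1)/(√(b/a) + 1))^{k−m} ‖u − u₀‖_T, where K = max_{λ ∈ σ₁} ∏_{μ ∈ σ₀} |1 − λ/μ|. -/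
open RealInnerProductSpace

/-- The energy norm `‖v‖_T = ⟨Tv, v⟩^{1/2}` associated with a (self-adjoint
positive-definite) linear operator `T` on a real inner product space. -/
noncomputable def energyNorm {V : Type*} [NormedAddCommGroup V] [InnerProductSpace ℝ V]
    (T : V →ₗ[ℝ] V) (v : V) : ℝ :=
  Real.sqrt ⟪T v, v⟫

/-- A sequence `(u_k)` has the conjugate-gradient optimality property for target `u`
and initial guess `u₀` with respect to `T` if for every `k` and every real polynomial
`p` with `deg p ≤ k` and `p(0) = 1`, `‖u - u_k‖_T ≤ ‖p(T)(u - u₀)‖_T`. -/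
def CGOptimal {V : Type*} [NormedAddCommGroup V] [InnerProductSpace ℝ V]
    (T : V →ₗ[ℝ] V) (u u₀ : V) (useq : ℕ → V) : Prop :=
  ∀ (k : ℕ) (p : Polynomial ℝ), p.natDegree ≤ k → p.eval 0 = 1 →
    energyNorm T (u - useq k) ≤
      energyNorm T ((Polynomial.aeval (T : Module.End ℝ V) p) (u - u₀))

/-! The residual polynomial `p = q · P` does the work. `P x = ∏_{μ ∈ σ₀} (1 - x / μ)` has degree
`m`, vanishes on `σ₀` and is bounded by `K` on `σ₁`; `q` is the Chebyshev polynomial of degree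
`k - m` transported to `[a, b]` and normalised by `q 0 = 1`, so that `|q| ≤ 2 rᵏ⁻ᵐ` on `[a, b]`
with `r = (√(b/a) - 1) / (√(b/a) + 1)`. Expanding in an orthonormal eigenbasis of `T`,
`‖p(T) e‖_T ≤ max_{λ ∈ spec T} |p λ| · ‖e‖_T`, and CG optimality compares `u - u_k` with
`p(T) (u - u₀)`. -/

open Polynomial Module.End

theorem Module.End.HasEigenvalue.pos_of_inner_apply_self_pos {V : Type*} [NormedAddCommGroup V]
    [InnerProductSpace ℝ V] {T : V →ₗ[ℝ] V} (hpd : ∀ v : V, v ≠ 0 → 0 < ⟪T v, v⟫) {μ : ℝ}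
    (h : HasEigenvalue T μ) : 0 < μ := by
  obtain ⟨v, hv, hv0⟩ := h.exists_hasEigenvector
  have hinner : ⟪T v, v⟫ = μ * ‖v‖ ^ 2 := by
    rw [mem_eigenspace_iff.mp hv, real_inner_smul_left, real_inner_self_eq_norm_sq]
  exact pos_of_mul_pos_left (hinner ▸ hpd v hv0) (by positivity)

theorem LinearMap.IsSymmetric.repr_aeval_eigenvectorBasis {𝕜 V : Type*} [RCLike 𝕜]
    [NormedAddCommGroup V] [InnerProductSpace 𝕜 V] [FiniteDimensional 𝕜 V] {T : V →ₗ[𝕜] V}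
    (hT : T.IsSymmetric) {n : ℕ} (hn : Module.finrank 𝕜 V = n) (p : 𝕜[X]) (v : V) (i : Fin n) :
    (hT.eigenvectorBasis hn).repr (aeval T p v) i =
      p.eval (hT.eigenvalues hn i : 𝕜) * (hT.eigenvectorBasis hn).repr v i := by
  set B := hT.eigenvectorBasis hn
  have hB (j : Fin n) : aeval T p (B j) = p.eval (hT.eigenvalues hn j : 𝕜) • B j :=
    aeval_apply_of_hasEigenvector (hT.hasEigenvector_eigenvectorBasis hn j)
  conv_lhs => rw [← B.sum_repr v]
  simp only [map_sum, map_smul, hB, smul_smul, B.repr_self]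
  simp [Pi.single_apply, mul_comm]

section EnergyNorm

variable {V : Type*} [NormedAddCommGroup V] [InnerProductSpace ℝ V] [FiniteDimensional ℝ V]
  {T : V →ₗ[ℝ] V}

theorem LinearMap.IsSymmetric.inner_apply_self_eq_sum (hT : T.IsSymmetric) {n : ℕ}
    (hn : Module.finrank ℝ V = n) (v : V) :
    ⟪T v, v⟫ = ∑ i, hT.eigenvalues hn i * (hT.eigenvectorBasis hn).repr v i ^ 2 := by
  rw [← (hT.eigenvectorBasis hn).sum_inner_mul_inner]
  refine Finset.sum_congr rfl fun i _ => ?_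
  have := hT.eigenvectorBasis_apply_self_apply hn v i
  simp only [OrthonormalBasis.repr_apply_apply] at this ⊢
  rw [real_inner_comm, this, RCLike.ofReal_real_eq_id, id_eq, sq, mul_assoc]

theorem energyNorm_aeval_le (hT : T.IsPositive) (p : ℝ[X]) {M : ℝ} (hM : 0 ≤ M)
    (hp : ∀ μ, HasEigenvalue T μ → |p.eval μ| ≤ M) (v : V) :
    energyNorm T (aeval T p v) ≤ M * energyNorm T v := by
  set hS := hT.isSymmetric
  have hsq : ⟪T (aeval T p v), aeval T p v⟫ ≤ M ^ 2 * ⟪T v, v⟫ := by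
    rw [hS.inner_apply_self_eq_sum rfl, hS.inner_apply_self_eq_sum rfl, Finset.mul_sum]
    refine Finset.sum_le_sum fun i _ => ?_
    have hμ := hT.nonneg_eigenvalues rfl i
    have hpM : p.eval (hS.eigenvalues rfl i) ^ 2 ≤ M ^ 2 :=
      sq_le_sq.mpr ((hp _ (hS.hasEigenvalue_eigenvalues rfl i)).trans_eq (abs_of_nonneg hM).symm)
    calc _ = p.eval (hS.eigenvalues rfl i) ^ 2 *
          (hS.eigenvalues rfl i * (hS.eigenvectorBasis rfl).repr v i ^ 2) := by
          rw [hS.repr_aeval_eigenvectorBasis, RCLike.ofReal_real_eq_id, id_eq]; ring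
      _ ≤ _ := mul_le_mul_of_nonneg_right hpM (by positivity)
  calc energyNorm T (aeval T p v) ≤ √(M ^ 2 * ⟪T v, v⟫) := Real.sqrt_le_sqrt hsq
    _ = M * energyNorm T v := by rw [Real.sqrt_mul (sq_nonneg M), Real.sqrt_sq hM, energyNorm]

theorem CGOptimal.energyNorm_le {u u₀ : V} {useq : ℕ → V} (hcg : CGOptimal T u u₀ useq)
    (hT : T.IsPositive) {k : ℕ} {p : ℝ[X]} (hdeg : p.natDegree ≤ k) (hp₀ : p.eval 0 = 1)
    {M : ℝ} (hM : 0 ≤ M) (hp : ∀ μ, HasEigenvalue T μ → |p.eval μ| ≤ M) :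
    energyNorm T (u - useq k) ≤ M * energyNorm T (u - u₀) :=
  (hcg k p hdeg hp₀).trans (energyNorm_aeval_le hT p hM hp _)

end EnergyNorm

theorem exists_eval_eq_prod_one_sub_div {K : Type*} [Field K] (s : Finset K) :
    ∃ P : K[X], P.natDegree ≤ s.card ∧ ∀ x, P.eval x = ∏ μ ∈ s, (1 - x / μ) := by
  refine ⟨∏ μ ∈ s, (C (-μ⁻¹) * X + C 1), ?_, fun x => ?_⟩
  · refine (natDegree_prod_le _ _).trans ?_
    have := Finset.sum_le_card_nsmul s _ 1 fun μ _ => natDegree_linear_le (a := -μ⁻¹) (b := 1)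
    rwa [smul_eq_mul, mul_one] at this
  · simp [eval_prod, div_eq_inv_mul, sub_eq_neg_add]

theorem Polynomial.Chebyshev.pow_div_two_le_eval_T {s : ℝ} (hs : 0 < s) (n : ℕ) :
    s ^ n / 2 ≤ (T ℝ n).eval ((s + s⁻¹) / 2) := by
  rw [← Real.cosh_log hs, T_real_cosh, Real.cosh_eq, Int.cast_natCast, Real.exp_nat_mul,
    Real.exp_log hs]
  linarith [Real.exp_pos (-(n * Real.log s))]

/-- The affine map `x ↦ (a + b - 2x) / (b - a)` sends `[a, b]` onto `[-1, 1]` and `0` to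
`(s + s⁻¹) / 2`, where `s = (κ + 1) / (κ - 1)` and `κ = √(b / a)`. -/
theorem exists_residual_poly_le_of_lt {a b : ℝ} (ha : 0 < a) (hab : a < b) (n : ℕ) :
    ∃ q : ℝ[X], q.natDegree ≤ n ∧ q.eval 0 = 1 ∧
      ∀ x ∈ Set.Icc a b, |q.eval x| ≤ 2 * ((√(b / a) - 1) / (√(b / a) + 1)) ^ n := by
  set κ := √(b / a)
  have hκ : 1 < κ := by
    rw [Real.lt_sqrt zero_le_one, one_pow, one_lt_div ha]; exact hab
  have hb : b = κ ^ 2 * a := by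
    rw [Real.sq_sqrt (div_pos (ha.trans hab) ha).le]; field_simp
  have hx₀ : ((κ + 1) / (κ - 1) + ((κ + 1) / (κ - 1))⁻¹) / 2 = (a + b) / (b - a) := by
    have : κ - 1 ≠ 0 := by linarith
    have : b - a ≠ 0 := by linarith
    field_simp
    rw [hb]
    ring
  set s := (κ + 1) / (κ - 1)
  have hs : 0 < s := div_pos (by linarith) (by linarith)
  have hc : s ^ n / 2 ≤ (Chebyshev.T ℝ n).eval ((a + b) / (b - a)) :=
    hx₀ ▸ Chebyshev.pow_div_two_le_eval_T hs n
  set c := (Chebyshev.T ℝ n).eval ((a + b) / (b - a))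
  have hc₀ : 0 < c := lt_of_lt_of_le (by positivity) hc
  refine ⟨C c⁻¹ * (Chebyshev.T ℝ n).comp (C (-2 / (b - a)) * X + C ((a + b) / (b - a))),
    ?_, ?_, fun x hx => ?_⟩
  · refine (natDegree_C_mul_le _ _).trans ?_
    rw [natDegree_comp, Chebyshev.natDegree_T, Int.natAbs_natCast]
    exact mul_le_of_le_one_right (Nat.zero_le n) natDegree_linear_le
  · simpa [eval_comp] using inv_mul_cancel₀ hc₀.ne'
  · have hy : |(-2 / (b - a)) * x + (a + b) / (b - a)| ≤ 1 := by
      rw [show -2 / (b - a) * x + (a + b) / (b - a) = (a + b - 2 * x) / (b - a) by ring,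
        abs_div, abs_of_pos (sub_pos.mpr hab), div_le_one (sub_pos.mpr hab), abs_le]
      constructor <;> linarith [hx.1, hx.2]
    calc |eval x (C c⁻¹ * (Chebyshev.T ℝ n).comp (C (-2 / (b - a)) * X + C ((a + b) / (b - a))))|
        = c⁻¹ * |(Chebyshev.T ℝ n).eval ((-2 / (b - a)) * x + (a + b) / (b - a))| := by
          simp [eval_comp, abs_mul, abs_of_pos hc₀]
      _ ≤ c⁻¹ := mul_le_of_le_one_right (by positivity) (Chebyshev.abs_eval_T_real_le_one n hy)
      _ ≤ (s ^ n / 2)⁻¹ := inv_anti₀ (by positivity) hc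
      _ = 2 * s⁻¹ ^ n := by rw [inv_div, div_eq_mul_inv, inv_pow]
      _ = 2 * ((κ - 1) / (κ + 1)) ^ n := by rw [inv_div]

theorem exists_residual_poly_le {a b : ℝ} (ha : 0 < a) (hab : a ≤ b) (n : ℕ) :
    ∃ q : ℝ[X], q.natDegree ≤ n ∧ q.eval 0 = 1 ∧
      ∀ x ∈ Set.Icc a b, |q.eval x| ≤ 2 * ((√(b / a) - 1) / (√(b / a) + 1)) ^ n := by
  rcases hab.lt_or_eq with hab | rfl
  · exact exists_residual_poly_le_of_lt ha hab n
  refine ⟨(C (-a⁻¹) * X + C 1) ^ n, ?_, by simp, fun x hx => ?_⟩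
  · exact natDegree_pow_le.trans (mul_le_of_le_one_right (Nat.zero_le n) natDegree_linear_le)
  · obtain rfl : x = a := le_antisymm hx.2 hx.1
    cases n <;> simp [ha.ne']

/-- PCG convergence estimate in the presence of a cluster of "bad" eigenvalues.
If the eigenvalues of the self-adjoint positive-definite operator `T` split as
`σ₀ ∪ σ₁`, where `σ₀` has `m` elements and `σ₁ ⊆ [a,b]` with `0 < a ≤ b`, then any
sequence with the conjugate-gradient optimality property satisfies, for `k ≥ m`,
`‖u - u_k‖_T ≤ 2 K ((√(b/a) - 1)/(√(b/a) + 1))^{k-m} ‖u - u₀‖_T`, where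
`K = max_{λ ∈ σ₁} ∏_{μ ∈ σ₀} |1 - λ/μ|`. -/
theorem pcg_convergence_clustered
    {V : Type*} [NormedAddCommGroup V] [InnerProductSpace ℝ V] [FiniteDimensional ℝ V]
    (T : V →ₗ[ℝ] V)
    (hsa : ∀ u v : V, ⟪T u, v⟫ = ⟪u, T v⟫)
    (hpd : ∀ v : V, v ≠ 0 → 0 < ⟪T v, v⟫)
    (σ₀ σ₁ : Finset ℝ) (m : ℕ) (hm : σ₀.card = m) (hσ₁ : σ₁.Nonempty)
    (a b : ℝ) (ha : 0 < a) (hab : a ≤ b)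
    (hσ₁ab : (σ₁ : Set ℝ) ⊆ Set.Icc a b)
    (hspec : {lam : ℝ | Module.End.HasEigenvalue (T : Module.End ℝ V) lam} =
      (σ₀ : Set ℝ) ∪ (σ₁ : Set ℝ))
    (u u₀ : V) (useq : ℕ → V) (hcg : CGOptimal T u u₀ useq) :
    ∀ k : ℕ, m ≤ k →
      energyNorm T (u - useq k) ≤
        2 * (σ₁.sup' hσ₁ fun lam => ∏ μ ∈ σ₀, |1 - lam / μ|) *
          ((Real.sqrt (b / a) - 1) / (Real.sqrt (b / a) + 1)) ^ (k - m) *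
          energyNorm T (u - u₀) := by
  intro k hk
  have hT : T.IsPositive := ⟨hsa, fun v => by
    rcases eq_or_ne v 0 with rfl | hv
    · simp
    · exact (hpd v hv).le⟩
  have hmem (μ : ℝ) (hμ : HasEigenvalue T μ) : μ ∈ σ₀ ∨ μ ∈ σ₁ := by
    simpa using hspec.subset hμ
  obtain ⟨P, hPdeg, hP⟩ := exists_eval_eq_prod_one_sub_div σ₀
  have hPσ₀ (μ : ℝ) (hμ : μ ∈ σ₀) : P.eval μ = 0 := by
    have hμ₀ := (hspec.superset (Or.inl hμ) : HasEigenvalue T μ).pos_of_inner_apply_self_pos hpd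
    rw [hP]
    exact Finset.prod_eq_zero hμ (by rw [div_self hμ₀.ne', sub_self])
  set K := σ₁.sup' hσ₁ fun lam => ∏ μ ∈ σ₀, |1 - lam / μ|
  have hPσ₁ (x : ℝ) (hx : x ∈ σ₁) : |P.eval x| ≤ K := by
    rw [hP, Finset.abs_prod]
    exact Finset.le_sup' (fun lam => ∏ μ ∈ σ₀, |1 - lam / μ|) hx
  obtain ⟨q, hqdeg, hq₀, hq⟩ := exists_residual_poly_le ha hab (k - m)
  set r := (√(b / a) - 1) / (√(b / a) + 1)
  have hr : 0 ≤ 2 * r ^ (k - m) := (abs_nonneg _).trans (hq a ⟨le_rfl, hab⟩)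
  have hK : 0 ≤ K := let ⟨x, hx⟩ := hσ₁; (abs_nonneg _).trans (hPσ₁ x hx)
  have hM : 0 ≤ 2 * K * r ^ (k - m) := by linarith [mul_nonneg hK hr]
  refine hcg.energyNorm_le hT (p := q * P) (natDegree_mul_le.trans (by omega))
    (by simp [hq₀, hP]) hM fun μ hμ => ?_
  rw [eval_mul, abs_mul]
  rcases hmem μ hμ with hμ | hμ
  · rwa [hPσ₀ μ hμ, abs_zero, mul_zero]
  · calc _ ≤ 2 * r ^ (k - m) * K := mul_le_mul (hq μ (hσ₁ab hμ)) (hPσ₁ μ hμ) (abs_nonneg _) hr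
      _ = _ := by ring
end

section
/- Let a, b be real numbers with 0 < a ≤ b and let k ≥ 0 be an integer. Then there exists a real polynomial p with deg p ≤ k and p(0) = 1 such that |p(λ)| ≤ 2 ((√(b/a) − 1)/(√(b/a) + 1))^k for every λ ∈ [a, b]. -/
/-!
Map `[a, b]` affinely onto `[-1, 1]` by `ℓ(λ) = (a + b - 2λ)/(b - a)`, which sends `0` to
`μ = (a + b)/(b - a) > 1`, and take `p = T_k(ℓ(λ)) / T_k(μ)`. On `[a, b]` the numerator is
bounded by `1`. Writing `μ = (s + s⁻¹)/2 = cosh (log s)` with `s = (√κ + 1)/(√κ - 1)`,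
`κ = b/a`, gives `T_k(μ) = cosh (k log s) ≥ s^k / 2`, whence `|p| ≤ 2 s⁻ᵏ`.
-/

open Polynomial Polynomial.Chebyshev

namespace Polynomial.Chebyshev

theorem pow_div_two_le_eval_T_s6 {s : ℝ} (hs : 0 < s) (n : ℕ) :
    s ^ n / 2 ≤ (T ℝ n).eval ((s + s⁻¹) / 2) := by
  rw [← Real.cosh_log hs, T_real_cosh, Int.cast_natCast, Real.cosh_eq, ← Real.log_pow,
    Real.exp_log (pow_pos hs n)]
  linarith [Real.exp_pos (-Real.log (s ^ n))]

end Polynomial.Chebyshev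

theorem natDegree_C_sub_C_mul_X_le {R : Type*} [Ring R] (c d : R) :
    (C c - C d * X).natDegree ≤ 1 :=
  (natDegree_sub_le _ _).trans (max_le (by simp) ((natDegree_C_mul_le _ _).trans natDegree_X_le))

noncomputable def shiftedChebyshev (a b : ℝ) (n : ℕ) : ℝ[X] :=
  (T ℝ n).comp (C ((a + b) / (b - a)) - C (2 / (b - a)) * X)

section shiftedChebyshev

variable (a b : ℝ) (n : ℕ)

theorem natDegree_shiftedChebyshev_le : (shiftedChebyshev a b n).natDegree ≤ n :=
  calc (shiftedChebyshev a b n).natDegree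
      ≤ (T ℝ n).natDegree * 1 :=
        natDegree_comp_le.trans (Nat.mul_le_mul_left _ (natDegree_C_sub_C_mul_X_le _ _))
    _ = n := by rw [natDegree_T, mul_one, Int.natAbs_natCast]

theorem eval_zero_shiftedChebyshev :
    (shiftedChebyshev a b n).eval 0 = (T ℝ n).eval ((a + b) / (b - a)) := by
  simp [shiftedChebyshev]

variable {a b}

theorem abs_eval_shiftedChebyshev_le_one (hab : a < b) {x : ℝ} (hx : x ∈ Set.Icc a b) :
    |(shiftedChebyshev a b n).eval x| ≤ 1 := by
  have hba : 0 < b - a := sub_pos.mpr hab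
  have hlin : (a + b) / (b - a) - 2 / (b - a) * x = (a + b - 2 * x) / (b - a) := by
    field_simp
  rw [shiftedChebyshev, eval_comp]
  refine abs_eval_T_real_le_one _ ?_
  simp only [eval_sub, eval_mul, eval_C, eval_X, hlin, abs_div, abs_of_pos hba,
    div_le_one hba, abs_le]
  constructor <;> linarith [hx.1, hx.2]

end shiftedChebyshev

theorem exists_natDegree_le_eval_zero_eq_one_abs_le_two_mul_inv_pow {a b s : ℝ} (hab : a < b)
    (hs : 0 < s) (hμ : (s + s⁻¹) / 2 = (a + b) / (b - a)) (k : ℕ) :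
    ∃ p : ℝ[X], p.natDegree ≤ k ∧ p.eval 0 = 1 ∧
      ∀ x ∈ Set.Icc a b, |p.eval x| ≤ 2 * s⁻¹ ^ k := by
  have hTμ : s ^ k / 2 ≤ (T ℝ k).eval ((a + b) / (b - a)) := hμ ▸ pow_div_two_le_eval_T_s6 hs k
  set Tμ := (T ℝ k).eval ((a + b) / (b - a))
  have hTμ_pos : 0 < Tμ := (by positivity : 0 < s ^ k / 2).trans_le hTμ
  have hTμ_inv_pos : 0 < Tμ⁻¹ := inv_pos.mpr hTμ_pos
  refine ⟨C Tμ⁻¹ * shiftedChebyshev a b k,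
    (natDegree_C_mul_le _ _).trans (natDegree_shiftedChebyshev_le a b k),
    by rw [eval_mul, eval_C, eval_zero_shiftedChebyshev, inv_mul_cancel₀ hTμ_pos.ne'],
    fun x hx => ?_⟩
  calc |(C Tμ⁻¹ * shiftedChebyshev a b k).eval x|
      = Tμ⁻¹ * |(shiftedChebyshev a b k).eval x| := by
        rw [eval_mul, eval_C, abs_mul, abs_of_pos hTμ_inv_pos]
    _ ≤ Tμ⁻¹ :=
        mul_le_of_le_one_right hTμ_inv_pos.le (abs_eval_shiftedChebyshev_le_one k hab hx)
    _ ≤ (s ^ k / 2)⁻¹ := inv_anti₀ (by positivity) hTμ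
    _ = 2 * s⁻¹ ^ k := by rw [inv_div, inv_pow, div_eq_mul_inv]

theorem exists_natDegree_le_one_eval_zero_eq_one_eval_eq_zero {a : ℝ} (ha : a ≠ 0) :
    ∃ p : ℝ[X], p.natDegree ≤ 1 ∧ p.eval 0 = 1 ∧ p.eval a = 0 :=
  ⟨C 1 - C a⁻¹ * X, natDegree_C_sub_C_mul_X_le _ _, by simp, by simp [inv_mul_cancel₀ ha]⟩

/-- Chebyshev-polynomial bound: for `0 < a ≤ b` and every integer `k ≥ 0` there is a
real polynomial `p` with `deg p ≤ k` and `p(0) = 1` such that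
`|p(λ)| ≤ 2 ((√(b/a) - 1)/(√(b/a) + 1))^k` for every `λ ∈ [a, b]`. -/
theorem chebyshev_bound (a b : ℝ) (ha : 0 < a) (hab : a ≤ b) (k : ℕ) :
    ∃ p : Polynomial ℝ, p.natDegree ≤ k ∧ p.eval 0 = 1 ∧
      ∀ lam ∈ Set.Icc a b,
        |p.eval lam| ≤ 2 * ((Real.sqrt (b / a) - 1) / (Real.sqrt (b / a) + 1)) ^ k := by
  rcases hab.eq_or_lt with rfl | hab
  · rcases k.eq_zero_or_pos with rfl | hk
    · exact ⟨1, by simp, by simp, fun _ _ => by norm_num⟩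
    obtain ⟨p, hdeg, hp0, hpa⟩ := exists_natDegree_le_one_eval_zero_eq_one_eval_eq_zero ha.ne'
    refine ⟨p, hdeg.trans hk, hp0, fun lam hlam => ?_⟩
    rw [le_antisymm hlam.2 hlam.1, hpa, div_self ha.ne', Real.sqrt_one]
    simp [hk.ne']
  set c := Real.sqrt (b / a)
  have hc : 1 < c := (Real.lt_sqrt zero_le_one).mpr (by rw [one_pow, one_lt_div ha]; exact hab)
  have hb : b = a * c ^ 2 := by rw [Real.sq_sqrt (div_pos (ha.trans hab) ha).le]; field_simp
  have hμ : ((c + 1) / (c - 1) + ((c + 1) / (c - 1))⁻¹) / 2 = (a + b) / (b - a) := by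
    have : c - 1 ≠ 0 := by linarith
    have : c ^ 2 - 1 ≠ 0 := by nlinarith
    rw [hb]; field_simp; ring
  simpa only [inv_div] using
    exists_natDegree_le_eval_zero_eq_one_abs_le_two_mul_inv_pow hab (by positivity) hμ k
end
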